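/- Let φ : 𝕋 → ℂ be a measurable function such that |φ(ζ)| = 1 for m-a.e. ζ ∈ 𝕋 and ∫_𝕋 φ(ζ)ⁿ dm(ζ) = 0 for every integer n ≥ 1. Then for every a ∈ 𝔻, ∫_𝕋 (1 - |a|²)/|1 - conj(a)·φ(ζ)|² dm(ζ) = 1. In particular, this integral does not tend to 0 as |a| → 1⁻. -/

import Mathlib

/-!
For `‖w‖ < 1` the Poisson kernel `(1 - ‖w‖²) / ‖1 - w‖²` is `1 + 2 Re (w / (1 - w)) =
1 + 2 Re ∑_{n ≥ 1} wⁿ`. Taking `w = conj(a) φ(ζ)`, which has modulus `‖a‖ < 1` a.e., the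
geometric series converges uniformly on `𝕋`, so it may be integrated term by term; every term
`conj(a)ⁿ ∫ φⁿ dm` vanishes, leaving `∫ 1 dm = 1`. Since the average is constantly `1` on `𝔻`,
it cannot tend to `0` at the boundary.
-/

open MeasureTheory Filter Metric Complex

/-- The filter of points `a` of the open unit disk `𝔻` with `|a| → 1⁻`. -/
noncomputable def toBoundary : Filter ℂ :=
  Filter.comap (fun a : ℂ => ‖a‖) (nhdsWithin 1 (Set.Iio 1))

/-- The average of `f` over the unit circle `𝕋` with respect to normalized
arclength measure `m`: `∫_𝕋 f dm = (2π)⁻¹ ∫_0^{2π} f(e^{iθ}) dθ`. -/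
noncomputable def circleAvg (f : ℂ → ℝ) : ℝ :=
  (2 * Real.pi)⁻¹ * ∫ θ in (0:ℝ)..(2 * Real.pi), f (Complex.exp (θ * Complex.I))

lemma one_sub_norm_sq_div_norm_one_sub_sq {w : ℂ} (hw : w ≠ 1) :
    (1 - ‖w‖ ^ 2) / ‖1 - w‖ ^ 2 = 1 + 2 * (w / (1 - w)).re := by
  have h : normSq (1 - w) ≠ 0 := normSq_eq_zero.not.mpr (sub_ne_zero.mpr hw.symm)
  rw [← normSq_eq_norm_sq, ← normSq_eq_norm_sq, div_re]
  field_simp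
  simp only [normSq_apply, sub_re, sub_im, one_re, one_im]
  ring

lemma tsum_pow_succ_eq_div_one_sub {w : ℂ} (hw : ‖w‖ < 1) :
    ∑' n : ℕ, w ^ (n + 1) = w / (1 - w) := by
  simp_rw [pow_succ', tsum_mul_left, tsum_geometric_of_norm_lt_one hw, div_eq_mul_inv]

section

variable {α : Type*} [MeasurableSpace α] {μ : Measure α} {f : α → ℂ} {c : ℂ}

lemma ae_norm_const_mul_le (hf_le : ∀ᵐ x ∂μ, ‖f x‖ ≤ 1) : ∀ᵐ x ∂μ, ‖c * f x‖ ≤ ‖c‖ := by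
  filter_upwards [hf_le] with x hx
  rw [norm_mul]
  exact mul_le_of_le_one_right (norm_nonneg c) hx

variable [IsFiniteMeasure μ]

lemma integral_div_one_sub_eq_zero (hf : AEStronglyMeasurable f μ)
    (hf_le : ∀ᵐ x ∂μ, ‖f x‖ ≤ 1) (hmom : ∀ n : ℕ, 1 ≤ n → ∫ x, f x ^ n ∂μ = 0)
    (hc : ‖c‖ < 1) :
    ∫ x, c * f x / (1 - c * f x) ∂μ = 0 := by
  have hterm_le (n : ℕ) : ∀ᵐ x ∂μ, ‖(c * f x) ^ (n + 1)‖ ≤ ‖c‖ ^ (n + 1) := by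
    filter_upwards [ae_norm_const_mul_le hf_le] with x hx
    rw [norm_pow]
    gcongr
  have hint (n : ℕ) : Integrable (fun x => (c * f x) ^ (n + 1)) μ :=
    .of_bound ((hf.const_mul c).pow (n + 1)) _ (hterm_le n)
  have hsum : Summable fun n : ℕ => ∫ x, ‖(c * f x) ^ (n + 1)‖ ∂μ := by
    refine .of_nonneg_of_le (fun n => integral_nonneg fun x => norm_nonneg _)
      (fun n => ?_) (((summable_geometric_of_lt_one (norm_nonneg c) hc).comp_injective
        (add_left_injective 1)).mul_right (μ.real Set.univ))
    simpa [mul_comm] using integral_mono_ae (hint n).norm (integrable_const _) (hterm_le n)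
  calc ∫ x, c * f x / (1 - c * f x) ∂μ
      = ∫ x, ∑' n : ℕ, (c * f x) ^ (n + 1) ∂μ := by
        refine integral_congr_ae ?_
        filter_upwards [ae_norm_const_mul_le hf_le] with x hx
        exact (tsum_pow_succ_eq_div_one_sub (hx.trans_lt hc)).symm
    _ = ∑' n : ℕ, c ^ (n + 1) * ∫ x, f x ^ (n + 1) ∂μ := by
        simp_rw [← integral_tsum_of_summable_integral_norm hint hsum, mul_pow, integral_const_mul]
    _ = 0 := by simp [hmom]

lemma integrable_div_one_sub (hf : AEStronglyMeasurable f μ)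
    (hf_le : ∀ᵐ x ∂μ, ‖f x‖ ≤ 1) (hc : ‖c‖ < 1) :
    Integrable (fun x => c * f x / (1 - c * f x)) μ := by
  refine .of_bound ((hf.const_mul c).aemeasurable.div
    (aemeasurable_const.sub (hf.const_mul c).aemeasurable)).aestronglyMeasurable
    (‖c‖ / (1 - ‖c‖)) ?_
  filter_upwards [ae_norm_const_mul_le hf_le] with x hcf
  have hden : 1 - ‖c‖ ≤ ‖1 - c * f x‖ :=
    calc 1 - ‖c‖ ≤ ‖(1 : ℂ)‖ - ‖c * f x‖ := by rw [norm_one]; linarith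
      _ ≤ ‖1 - c * f x‖ := norm_sub_norm_le _ _
  rw [norm_div]
  exact div_le_div₀ (norm_nonneg c) hcf (by linarith) hden

theorem integral_poissonKernel_comp_eq (hf : AEStronglyMeasurable f μ)
    (hf_norm : ∀ᵐ x ∂μ, ‖f x‖ = 1) (hmom : ∀ n : ℕ, 1 ≤ n → ∫ x, f x ^ n ∂μ = 0)
    (hc : ‖c‖ < 1) :
    ∫ x, (1 - ‖c‖ ^ 2) / ‖1 - c * f x‖ ^ 2 ∂μ = μ.real Set.univ := by
  have hf_le : ∀ᵐ x ∂μ, ‖f x‖ ≤ 1 := hf_norm.mono fun x hx => hx.le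
  have hg : Integrable (fun x => (c * f x / (1 - c * f x)).re) μ :=
    (integrable_div_one_sub hf hf_le hc).re
  calc ∫ x, (1 - ‖c‖ ^ 2) / ‖1 - c * f x‖ ^ 2 ∂μ
      = ∫ x, 1 + 2 * (c * f x / (1 - c * f x)).re ∂μ := by
        refine integral_congr_ae ?_
        filter_upwards [hf_norm] with x hx
        have hcf : ‖c * f x‖ = ‖c‖ := by rw [norm_mul, hx, mul_one]
        rw [← hcf]
        refine one_sub_norm_sq_div_norm_one_sub_sq fun h => ?_
        rw [h, norm_one] at hcf
        linarith
    _ = μ.real Set.univ + 2 * (∫ x, c * f x / (1 - c * f x) ∂μ).re := by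
        rw [integral_add (integrable_const _) (hg.const_mul 2), integral_const_mul,
          integral_const, smul_eq_mul, mul_one]
        exact congrArg (μ.real Set.univ + 2 * ·) (integral_re (integrable_div_one_sub hf hf_le hc))
    _ = μ.real Set.univ := by
        rw [integral_div_one_sub_eq_zero hf hf_le hmom hc]
        simp

end

lemma ball_mem_toBoundary : ball (0 : ℂ) 1 ∈ toBoundary := by
  have h : ball (0 : ℂ) 1 = (fun a : ℂ => ‖a‖) ⁻¹' Set.Iio 1 := by ext; simp
  exact h ▸ preimage_mem_comap self_mem_nhdsWithin

instance toBoundary_neBot : toBoundary.NeBot := by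
  refine comap_neBot fun t ht => ?_
  obtain ⟨r, hrt, hr⟩ := nonempty_of_mem (inter_mem ht (Ioo_mem_nhdsLT (zero_lt_one' ℝ)))
  exact ⟨r, by rwa [norm_real, Real.norm_of_nonneg hr.1.le]⟩

lemma not_tendsto_toBoundary_zero {g : ℂ → ℝ} (hg : ∀ a ∈ ball (0 : ℂ) 1, g a = 1) :
    ¬ Tendsto g toBoundary (nhds 0) := fun h =>
  zero_ne_one <| tendsto_nhds_unique h <|
    tendsto_const_nhds.congr' <| eventually_of_mem ball_mem_toBoundary fun a ha => (hg a ha).symm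

lemma circleAvg_poissonKernel_comp_eq_one {φ : ℂ → ℂ} (hmeas : Measurable φ)
    (hmod : ∀ᵐ θ : ℝ ∂volume.restrict (Set.Ioc 0 (2 * Real.pi)), ‖φ (exp (θ * I))‖ = 1)
    (hmom : ∀ n : ℕ, 1 ≤ n → ∫ θ in 0..2 * Real.pi, φ (exp (θ * I)) ^ n = 0)
    {a : ℂ} (ha : ‖a‖ < 1) :
    circleAvg (fun ζ => (1 - ‖a‖ ^ 2) / ‖1 - (starRingEnd ℂ) a * φ ζ‖ ^ 2) = 1 := by
  have h2pi : 0 ≤ 2 * Real.pi := by positivity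
  have hF : AEStronglyMeasurable (fun θ : ℝ => φ (exp (θ * I)))
      (volume.restrict (Set.Ioc 0 (2 * Real.pi))) :=
    (hmeas.comp (by fun_prop)).aestronglyMeasurable
  have hmom' (n : ℕ) (hn : 1 ≤ n) :
      ∫ θ in Set.Ioc 0 (2 * Real.pi), φ (exp (θ * I)) ^ n = 0 := by
    rw [← intervalIntegral.integral_of_le h2pi]
    exact hmom n hn
  rw [circleAvg, intervalIntegral.integral_of_le h2pi, ← norm_conj a,
    integral_poissonKernel_comp_eq hF hmod hmom' (by rwa [norm_conj]),
    measureReal_restrict_apply_univ, Real.volume_real_Ioc_of_le h2pi, sub_zero]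
  field_simp

theorem inner_function_poisson_integral_eq_one (φ : ℂ → ℂ)
    (hmeas : Measurable φ)
    (hmod : ∀ᵐ (θ : ℝ) ∂(volume.restrict (Set.Ioc (0:ℝ) (2 * Real.pi))),
      ‖φ (Complex.exp (θ * Complex.I))‖ = 1)
    (hmom : ∀ n : ℕ, 1 ≤ n →
      (∫ θ in (0:ℝ)..(2 * Real.pi), (φ (Complex.exp (θ * Complex.I))) ^ n) = 0) :
    (∀ a ∈ Metric.ball (0:ℂ) 1,
        circleAvg (fun ζ =>
          (1 - ‖a‖ ^ 2) / ‖1 - (starRingEnd ℂ) a * φ ζ‖ ^ 2) = 1)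
    ∧ ¬ Filter.Tendsto
        (fun a : ℂ => circleAvg (fun ζ =>
          (1 - ‖a‖ ^ 2) / ‖1 - (starRingEnd ℂ) a * φ ζ‖ ^ 2))
        toBoundary (nhds 0) := by
  have hone : ∀ a ∈ ball (0 : ℂ) 1,
      circleAvg (fun ζ => (1 - ‖a‖ ^ 2) / ‖1 - (starRingEnd ℂ) a * φ ζ‖ ^ 2) = 1 :=
    fun a ha => circleAvg_poissonKernel_comp_eq_one hmeas hmod hmom (mem_ball_zero_iff.mp ha)
  exact ⟨hone, not_tendsto_toBoundary_zero hone⟩
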